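/- arXiv:2112.12445 — 2 statements merged into one kernel-verified Lean document; each statement's English description precedes it below -/
import Mathlib

section
/- Assume conditions (i) and (ii). For j = λ−1,…,n−k−1 let A_j ⊆ ℤ be a set of λ integers that are pairwise distinct modulo m, and set I_2' = ⊔_{j=λ−1}^{n−k−1} A_j × {j} and M' = I_1 ⊔ I_2' ⊔ I_4. Then C_{M'} = C_M, and the vectors y^{[u,j]}, (u,j) ∈ M', are linearly independent over F_{q^m}. -/
/-!
Fix a column `j`. For any `λ` integers `u` pairwise distinct modulo `m`, assumption (i) makes the
vectors `y^{[u,j]}` an invertible transform of `h_0^{[j]}, …, h_{λ-1}^{[j]}`, so they span every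
`y^{[u',j]}`. In each column `j ∈ [λ-1, n-k-1]`, `M` contains `u = 0, …, λ-1` (and `λ ≤ m`) while
`M'` contains `A_j`; in all other columns `M` and `M'` agree. Hence `C_{M'} = C_M`. Column by
column `M'` has no more entries than `M`, so its `|M'|` vectors span a space of dimension
`|M| ≥ |M'|` (by (ii)) and are therefore independent.
-/

noncomputable section

/-- `frob q m i x = x ^ (q ^ (i mod m))`, the `i`-th Frobenius power `x^{[i]}`. -/
def frob {K : Type} [Field K] (q m : ℕ) (i : ℤ) (x : K) : K :=
  x ^ q ^ (i % (m : ℤ)).toNat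

/-- `yv q m h β u j` is `y^{[u,j]} = h_0^{[j]} + ∑_{i=1}^{λ-1} (β i)^{[u]} (h i)^{[j]}`,
under the convention `β 0 = 1`. -/
def yv {K : Type} [Field K] (q m : ℕ) {n lam : ℕ}
    (h : Fin lam → Fin n → K) (β : Fin lam → K) (u j : ℤ) : Fin n → K :=
  fun t => ∑ i, frob q m u (β i) * frob q m j (h i t)

/-- `C_I`, the `F_{q^m}`-span of the `y^{[u,j]}` for `(u,j) ∈ I`. -/
def codeC {K : Type} [Field K] (q m : ℕ) {n lam : ℕ}
    (h : Fin lam → Fin n → K) (β : Fin lam → K) (I : Set (ℤ × ℤ)) :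
    Submodule K (Fin n → K) :=
  Submodule.span K ((fun p : ℤ × ℤ => yv q m h β p.1 p.2) '' I)

/-- `C^{[i]}`, the componentwise Frobenius image of a subspace. -/
def frobSub {K : Type} [Field K] (q m : ℕ) {n : ℕ} (i : ℤ)
    (C : Submodule K (Fin n → K)) : Submodule K (Fin n → K) :=
  Submodule.span K ((fun v : Fin n → K => fun t => frob q m i (v t)) '' (C : Set (Fin n → K)))

/-- `1, β 1, …, β (λ-1)` (i.e. `β` with `β 0 = 1`) are linearly independent over `F_q`. -/
def LinIndepFq {K : Type} [Field K] (q : ℕ) {lam : ℕ} (β : Fin lam → K) : Prop :=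
  ∀ c : Fin lam → K, (∀ i, c i ^ q = c i) → (∑ i, c i * β i) = 0 → ∀ i, c i = 0

/-- index set of `C_pub⊥`, namely `{0} × [0, n-k-1]`. -/
def CpubSet (n k : ℕ) : Set (ℤ × ℤ) :=
  {(0 : ℤ)} ×ˢ Set.Icc (0 : ℤ) ((n : ℤ) - (k : ℤ) - 1)

def I1set (lam : ℕ) : Set (ℤ × ℤ) :=
  ⋃ u ∈ Set.Icc (0 : ℤ) ((lam : ℤ) - 2), {u} ×ˢ Set.Icc u ((lam : ℤ) - 2)

def I3set (n k lam : ℕ) : Set (ℤ × ℤ) :=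
  ⋃ u ∈ Set.Icc (0 : ℤ) ((lam : ℤ) - 1),
    {u} ×ˢ Set.Icc ((n : ℤ) - (k : ℤ)) ((n : ℤ) - (k : ℤ) + u - 1)

def I4set (n k lam : ℕ) : Set (ℤ × ℤ) :=
  I3set n k lam ∪
    {(lam : ℤ)} ×ˢ Set.Icc ((n : ℤ) - (k : ℤ)) ((n : ℤ) - (k : ℤ) + (lam : ℤ) - 1)

def Mset (n k lam : ℕ) : Set (ℤ × ℤ) :=
  ⋃ u ∈ Set.Icc (0 : ℤ) (lam : ℤ), {u} ×ˢ Set.Icc u ((n : ℤ) - (k : ℤ) + u - 1)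

/-- `I + a`. -/
def shiftSet (I : Set (ℤ × ℤ)) (a : ℤ) : Set (ℤ × ℤ) :=
  (fun p : ℤ × ℤ => (p.1 + a, p.2 + a)) '' I

/-- Assumption (i): for every tuple of `λ` integers pairwise distinct modulo `m`,
the matrix with rows `(1, β_1^{[u]}, …, β_{λ-1}^{[u]})` is invertible. -/
def CondI {K : Type} [Field K] (q m : ℕ) {lam : ℕ} (β : Fin lam → K) : Prop :=
  ∀ u : Fin lam → ℤ, (∀ s t, u s % (m : ℤ) = u t % (m : ℤ) → s = t) →
    IsUnit (Matrix.det (Matrix.of fun s t : Fin lam => frob q m (u s) (β t)))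

/-- Assumption (ii): the `y^{[u,j]}`, `(u,j) ∈ M`, are linearly independent. -/
def CondII {K : Type} [Field K] (q m : ℕ) (k : ℕ) {n lam : ℕ}
    (h : Fin lam → Fin n → K) (β : Fin lam → K) : Prop :=
  LinearIndependent K (fun p : Mset n k lam => yv q m h β p.val.1 p.val.2)

/-- `S_i = C_pub⊥^{[i]} + ⋯ + C_pub⊥^{[i+λ-1]}`. -/
def Ssum {K : Type} [Field K] (q m : ℕ) (k : ℕ) {n lam : ℕ}
    (h : Fin lam → Fin n → K) (β : Fin lam → K) (i : ℤ) : Submodule K (Fin n → K) :=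
  ⨆ t : Fin lam, frobSub q m (i + (t : ℕ)) (codeC q m h β (CpubSet n k))

end

open Submodule

theorem Set.encard_le_encard_of_fiber_le {α β : Type*} {S T : Set (α × β)} (hT : T.Finite)
    (hfib : ∀ b, {a | (a, b) ∈ S}.encard ≤ {a | (a, b) ∈ T}.encard) :
    S.encard ≤ T.encard := by
  rcases isEmpty_or_nonempty α with hα | hα
  · simp [Set.eq_empty_of_isEmpty S]
  have hSfib : ∀ b, {a | (a, b) ∈ S}.Finite := fun b =>
    (hT.preimage (Prod.mk_left_injective b).injOn).finite_of_encard_le (hfib b)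
  choose f hf using fun b => (hSfib b).exists_injOn_of_encard_le (hfib b)
  refine Set.encard_le_encard_of_injOn (f := fun p => (f p.2 p.1, p.2)) ?_ ?_
  · rintro ⟨a, b⟩ hab
    exact (hf b).1 hab
  · rintro ⟨a, b⟩ hab ⟨a', b'⟩ hab' heq
    obtain ⟨hfa, rfl⟩ := Prod.mk.inj heq
    rw [(hf b).2 hab hab' hfa]

theorem LinearIndependent.of_span_image_eq_of_encard_le {K V ι : Type*} [DivisionRing K]
    [AddCommGroup V] [Module K V] {v : ι → V} {s t : Set ι}
    (hv : LinearIndependent K (fun x : t => v x)) (ht : t.Finite)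
    (hspan : span K (v '' s) = span K (v '' t)) (hst : s.encard ≤ t.encard) :
    LinearIndependent K (fun x : s => v x) := by
  have hs : s.Finite := ht.finite_of_encard_le hst
  have := hs.fintype
  have := ht.fintype
  have hcard : Fintype.card s ≤ Fintype.card t := by
    rw [← Nat.card_eq_fintype_card, ← Nat.card_eq_fintype_card, Nat.card_coe_set_eq,
      Nat.card_coe_set_eq, ← ENat.natCast_le_natCast, hs.cast_ncard_eq, ht.cast_ncard_eq]
    exact hst
  rw [linearIndependent_iff_card_le_finrank_span, Set.finrank, ← Set.image_eq_range, hspan,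
    Set.image_eq_range, finrank_span_eq_card hv]
  exact hcard

theorem mem_span_range_sum_smul_of_isUnit_det {R V ι : Type*} [CommRing R] [AddCommGroup V]
    [Module R V] [Fintype ι] [DecidableEq ι] {B : Matrix ι ι R} (hB : IsUnit B.det) (w : ι → V)
    (i : ι) : w i ∈ span R (Set.range fun s => ∑ t, B s t • w t) := by
  have hinv : ∑ s, B⁻¹ i s • ∑ t, B s t • w t = w i := by
    simp_rw [Finset.smul_sum, smul_smul]
    rw [Finset.sum_comm]
    simp_rw [← Finset.sum_smul, ← Matrix.mul_apply, Matrix.nonsing_inv_mul B hB,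
      Matrix.one_apply, ite_smul, one_smul, zero_smul, Finset.sum_ite_eq, Finset.mem_univ, if_true]
  rw [← hinv]
  exact sum_mem fun s _ => smul_mem _ _ (subset_span ⟨s, rfl⟩)

theorem Int.ncard_Ico_zero (l : ℕ) : (Set.Ico (0 : ℤ) l).ncard = l := by
  rw [← Finset.coe_Ico, Set.ncard_coe_finset, Int.card_Ico]
  simp

theorem Int.injOn_emod_Ico_zero {l m : ℕ} (hlm : l ≤ m) :
    (Set.Ico (0 : ℤ) l).InjOn (· % (m : ℤ)) := by
  intro a ha b hb hab
  simp only [Set.mem_Ico] at ha hb hab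
  rwa [Int.emod_eq_of_lt ha.1 (by omega), Int.emod_eq_of_lt hb.1 (by omega)] at hab

section Columns

variable {K : Type} [Field K] {q m n lam : ℕ} (h : Fin lam → Fin n → K) {β : Fin lam → K}

theorem yv_eq_sum_smul (u j : ℤ) :
    yv q m h β u j = ∑ i, frob q m u (β i) • fun t => frob q m j (h i t) := by
  ext t
  simp [yv, Finset.sum_apply]

/-- Assumption (i) says that `y^{[u,j]}`, `u ∈ S`, arise from `h_0^{[j]}, …, h_{λ-1}^{[j]}` by an
invertible matrix, so they span every `y^{[u,j]}` of column `j`. -/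
theorem yv_mem_span_column (hi : CondI q m β) [NeZero lam] {S : Set ℤ} (hS : S.ncard = lam)
    (hSm : S.InjOn (· % (m : ℤ))) (u j : ℤ) :
    yv q m h β u j ∈ span K ((fun a => yv q m h β a j) '' S) := by
  classical
  have : Finite S := (Set.finite_of_ncard_ne_zero (hS.trans_ne (NeZero.ne lam))).to_subtype
  let e : S ≃ Fin lam := Finite.equivFinOfCardEq (by rw [Nat.card_coe_set_eq, hS])
  let U : Fin lam → ℤ := fun s => e.symm s
  have hU : ∀ s t, U s % (m : ℤ) = U t % (m : ℤ) → s = t := fun s t hst =>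
    e.symm.injective (Subtype.ext (hSm (e.symm s).2 (e.symm t).2 hst))
  have hrange : (Set.range fun s => yv q m h β (U s) j) ⊆ (fun a => yv q m h β a j) '' S := by
    rintro _ ⟨s, rfl⟩
    exact ⟨U s, (e.symm s).2, rfl⟩
  refine span_mono hrange ?_
  simp_rw [yv_eq_sum_smul h _ j]
  exact sum_mem fun i _ => smul_mem _ _ (mem_span_range_sum_smul_of_isUnit_det (hi U hU) _ i)

theorem codeC_le_iff {I : Set (ℤ × ℤ)} {C : Submodule K (Fin n → K)} :
    codeC q m h β I ≤ C ↔ ∀ p ∈ I, yv q m h β p.1 p.2 ∈ C := by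
  rw [codeC, span_le, Set.image_subset_iff]
  rfl

theorem codeC_le_of_full_columns (hi : CondI q m β) [NeZero lam] {I J : Set (ℤ × ℤ)}
    {cols : Set ℤ} (hIJ : ∀ p ∈ I, p.2 ∉ cols → p ∈ J)
    (hJ : ∀ j ∈ cols, ∃ S : Set ℤ, S.ncard = lam ∧ S.InjOn (· % (m : ℤ)) ∧ ∀ a ∈ S, (a, j) ∈ J) :
    codeC q m h β I ≤ codeC q m h β J := by
  rw [codeC_le_iff]
  intro p hp
  by_cases hp₂ : p.2 ∈ cols
  · obtain ⟨S, hS, hSm, hSJ⟩ := hJ p.2 hp₂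
    refine span_mono ?_ (yv_mem_span_column h hi hS hSm p.1 p.2)
    rintro _ ⟨a, ha, rfl⟩
    exact ⟨(a, p.2), hSJ a ha, rfl⟩
  · exact subset_span ⟨p, hIJ p hp hp₂, rfl⟩

end Columns

section IndexSets

variable {n k lam : ℕ} {p : ℤ × ℤ}

theorem mem_Mset :
    p ∈ Mset n k lam ↔
      0 ≤ p.1 ∧ p.1 ≤ (lam : ℤ) ∧ p.1 ≤ p.2 ∧ p.2 ≤ (n : ℤ) - (k : ℤ) + p.1 - 1 := by
  simp only [Mset, Set.mem_iUnion, Set.mem_prod, Set.mem_singleton_iff, Set.mem_Icc,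
    exists_prop]
  constructor
  · rintro ⟨u, hu, rfl, hj⟩
    exact ⟨hu.1, hu.2, hj⟩
  · rintro ⟨h0, h1, hj⟩
    exact ⟨p.1, ⟨h0, h1⟩, rfl, hj⟩

theorem mem_I1set : p ∈ I1set lam ↔ 0 ≤ p.1 ∧ p.1 ≤ p.2 ∧ p.2 ≤ (lam : ℤ) - 2 := by
  simp only [I1set, Set.mem_iUnion, Set.mem_prod, Set.mem_singleton_iff, Set.mem_Icc,
    exists_prop]
  constructor
  · rintro ⟨u, hu, rfl, hj⟩
    exact ⟨hu.1, hj⟩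
  · rintro ⟨h0, hj⟩
    exact ⟨p.1, ⟨h0, by omega⟩, rfl, hj⟩

theorem mem_I4set :
    p ∈ I4set n k lam ↔
      0 ≤ p.1 ∧ p.1 ≤ (lam : ℤ) ∧ (n : ℤ) - (k : ℤ) ≤ p.2 ∧
        p.2 ≤ (n : ℤ) - (k : ℤ) + p.1 - 1 := by
  simp only [I4set, I3set, Set.mem_union, Set.mem_iUnion, Set.mem_prod,
    Set.mem_singleton_iff, Set.mem_Icc, exists_prop]
  constructor
  · rintro (⟨u, hu, rfl, hj⟩ | ⟨hu, hj⟩) <;> omega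
  · rintro ⟨h0, h1, hj⟩
    rcases h1.lt_or_eq with hlt | heq
    · exact Or.inl ⟨p.1, ⟨h0, by omega⟩, rfl, hj⟩
    · exact Or.inr ⟨heq, hj.1, by omega⟩

theorem Mset_finite : (Mset n k lam).Finite := by
  refine ((Set.finite_Icc 0 (lam : ℤ)).prod
    (Set.finite_Icc 0 ((n : ℤ) - k + lam - 1))).subset fun p hp => ?_
  rw [mem_Mset] at hp
  simp only [Set.mem_prod, Set.mem_Icc]
  omega

/-- `M` and `M'` differ only in these columns. -/
def midCols (n k lam : ℕ) : Set ℤ :=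
  Set.Icc ((lam : ℤ) - 1) ((n : ℤ) - (k : ℤ) - 1)

def Mset' (n k lam : ℕ) (A : ℤ → Set ℤ) : Set (ℤ × ℤ) :=
  I1set lam ∪ (⋃ j ∈ midCols n k lam, A j ×ˢ {j}) ∪ I4set n k lam

variable {A : ℤ → Set ℤ}

theorem mem_Mset' :
    p ∈ Mset' n k lam A ↔
      p ∈ I1set lam ∨ (p.2 ∈ midCols n k lam ∧ p.1 ∈ A p.2) ∨ p ∈ I4set n k lam := by
  simp [Mset', or_assoc, and_comm]

theorem mem_Mset_of_mem_Mset' (hlam : (lam : ℤ) ≤ n - k) (hp : p ∈ Mset' n k lam A)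
    (hmid : p.2 ∉ midCols n k lam) : p ∈ Mset n k lam := by
  simp only [mem_Mset', mem_I1set, mem_I4set, midCols, Set.mem_Icc] at hp hmid
  rw [mem_Mset]
  omega

theorem mem_Mset'_of_mem_Mset (hp : p ∈ Mset n k lam) (hmid : p.2 ∉ midCols n k lam) :
    p ∈ Mset' n k lam A := by
  simp only [mem_Mset, midCols, Set.mem_Icc] at hp hmid
  rw [mem_Mset', mem_I1set, mem_I4set]
  omega

theorem Ico_subset_column_Mset {j : ℤ} (hj : j ∈ midCols n k lam) :
    Set.Ico (0 : ℤ) lam ⊆ {a | (a, j) ∈ Mset n k lam} := by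
  intro a ha
  simp only [Set.mem_ofPred_eq, mem_Mset, midCols, Set.mem_Icc, Set.mem_Ico] at ha hj ⊢
  omega

theorem column_Mset'_subset {j : ℤ} (hj : j ∈ midCols n k lam) :
    {a | (a, j) ∈ Mset' n k lam A} ⊆ A j := by
  intro a ha
  rcases mem_Mset'.1 ha with hI1 | ⟨-, haA⟩ | hI4
  · simp only [mem_I1set, midCols, Set.mem_Icc] at hI1 hj
    omega
  · exact haA
  · simp only [mem_I4set, midCols, Set.mem_Icc] at hI4 hj
    omega

/-- Column by column, `M'` has at most as many entries as `M`: in a middle column `M'` has the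
`λ` entries of `A j` and `M` has at least `0, …, λ-1`; elsewhere `M' ⊆ M`. -/
theorem encard_Mset'_le [NeZero lam] (hlam : (lam : ℤ) ≤ n - k)
    (hA : ∀ j ∈ midCols n k lam, (A j).ncard = lam) :
    (Mset' n k lam A).encard ≤ (Mset n k lam).encard := by
  refine Set.encard_le_encard_of_fiber_le Mset_finite fun j => ?_
  by_cases hmid : j ∈ midCols n k lam
  · have hAfin := Set.finite_of_ncard_ne_zero ((hA j hmid).trans_ne (NeZero.ne lam))
    calc {a | (a, j) ∈ Mset' n k lam A}.encard ≤ (A j).encard :=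
          Set.encard_le_encard (column_Mset'_subset hmid)
      _ = (Set.Ico (0 : ℤ) lam).encard := by
          rw [← hAfin.cast_ncard_eq, ← (Set.finite_Ico _ _).cast_ncard_eq, hA j hmid,
            Int.ncard_Ico_zero]
      _ ≤ _ := Set.encard_le_encard (Ico_subset_column_Mset hmid)
  · exact Set.encard_le_encard fun a ha => mem_Mset_of_mem_Mset' hlam ha hmid

end IndexSets

theorem stmt5_general (q m n k lam : ℕ) (hnm : n ≤ m) [NeZero lam]
    (hlamnk : lam ≤ n - k)
    (K : Type) [Field K]
    (h : Fin lam → Fin n → K) (β : Fin lam → K)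
    (hi : CondI q m β) (hii : CondII q m k h β)
    (A : ℤ → Set ℤ)
    (hA : ∀ j ∈ Set.Icc ((lam : ℤ) - 1) ((n : ℤ) - (k : ℤ) - 1),
      (A j).ncard = lam ∧ Set.InjOn (fun x : ℤ => x % (m : ℤ)) (A j))
    (I2' : Set (ℤ × ℤ))
    (hI2' : I2' = ⋃ j ∈ Set.Icc ((lam : ℤ) - 1) ((n : ℤ) - (k : ℤ) - 1), (A j) ×ˢ {j})
    (M' : Set (ℤ × ℤ)) (hM' : M' = I1set lam ∪ I2' ∪ I4set n k lam) :
    codeC q m h β M' = codeC q m h β (Mset n k lam) ∧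
    LinearIndependent K (fun p : M' => yv q m h β p.val.1 p.val.2) := by
  obtain rfl : M' = Mset' n k lam A := by rw [hM', hI2']; rfl
  have hlam : (lam : ℤ) ≤ n - k := by have := NeZero.one_le (n := lam); omega
  have hspan : codeC q m h β (Mset' n k lam A) = codeC q m h β (Mset n k lam) :=
    le_antisymm
      (codeC_le_of_full_columns h hi (fun _ hp => mem_Mset_of_mem_Mset' hlam hp)
        fun j hj => ⟨_, Int.ncard_Ico_zero lam, Int.injOn_emod_Ico_zero (by omega),
          Ico_subset_column_Mset hj⟩)
      (codeC_le_of_full_columns h hi (fun _ hp => mem_Mset'_of_mem_Mset hp)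
        fun j hj => ⟨A j, (hA j hj).1, (hA j hj).2,
          fun a ha => mem_Mset'.2 (Or.inr (Or.inl ⟨hj, ha⟩))⟩)
  exact ⟨hspan, LinearIndependent.of_span_image_eq_of_encard_le
    (v := fun p : ℤ × ℤ => yv q m h β p.1 p.2) hii Mset_finite hspan
    (encard_Mset'_le hlam fun j hj => (hA j hj).1)⟩

/-- replacing the middle block of `M` by arbitrary sets `A_j` of `λ`
integers pairwise distinct mod `m` gives `C_{M'} = C_M` with `y^{[M']}` independent. -/
theorem stmt5 (q m n k lam : ℕ) (hq : ∃ p e : ℕ, p.Prime ∧ 0 < e ∧ q = p ^ e)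
    (hm : 0 < m) (hk : k < n) (hnm : n ≤ m) (hlam : 2 ≤ lam) [NeZero lam]
    (hlamnk : lam ≤ n - k)
    (K : Type) [Field K] [Fintype K] (hcard : Fintype.card K = q ^ m)
    (h : Fin lam → Fin n → K) (β : Fin lam → K) (hβ0 : β 0 = 1)
    (hi : CondI q m β) (hii : CondII q m k h β)
    (A : ℤ → Set ℤ)
    (hA : ∀ j ∈ Set.Icc ((lam : ℤ) - 1) ((n : ℤ) - (k : ℤ) - 1),
      (A j).ncard = lam ∧ Set.InjOn (fun x : ℤ => x % (m : ℤ)) (A j))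
    (I2' : Set (ℤ × ℤ))
    (hI2' : I2' = ⋃ j ∈ Set.Icc ((lam : ℤ) - 1) ((n : ℤ) - (k : ℤ) - 1), (A j) ×ˢ {j})
    (M' : Set (ℤ × ℤ)) (hM' : M' = I1set lam ∪ I2' ∪ I4set n k lam) :
    codeC q m h β M' = codeC q m h β (Mset n k lam) ∧
    LinearIndependent K (fun p : M' => yv q m h β p.val.1 p.val.2) :=
  stmt5_general q m n k lam hnm hlamnk K h β hi hii A hA I2' hI2' M' hM'
end

section
/- Let A = (a_{i,j})_{i,j=0}^{λ−1} be an invertible λ×λ matrix with entries in F_q. In the field of rational functions F_q(X_1,…,X_{λ−1}), set D = a_{0,0} + Σ_{i=1}^{λ−1} a_{i,0} X_i (a nonzero polynomial) and φ_j = (a_{0,j} + Σ_{i=1}^{λ−1} a_{i,j} X_i)/D for j = 1,…,λ−1. Then for every set I = {i_1 < ⋯ < i_λ} of λ nonnegative integers, f^I(φ_1,…,φ_{λ−1}) = det(A) · D^{−N} · f^I(X_1,…,X_{λ−1}) in F_q(X_1,…,X_{λ−1}), where N = Σ_{s=1}^{λ} q^{i_s}. -/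
noncomputable section
open MvPolynomial

/-- `f^I = det(Mat^I)` where the `s`-th row of `Mat^I` is
`(1, X_1^{q^{i_s}}, X_2^{q^{i_s}}, …, X_{λ-1}^{q^{i_s}})`, the set
`I = {i_1 < ⋯ < i_λ}` being given by its (strictly increasing) enumeration `ι`. -/
def fI (q lam : ℕ) (F : Type) [CommRing F] (ι : Fin lam → ℕ) : MvPolynomial ℕ F :=
  Matrix.det (Matrix.of fun s t : Fin lam =>
    if (t : ℕ) = 0 then 1 else X (t : ℕ) ^ q ^ ι s)

/-- `f_0 = ∏_{a∈F_q}(X_1+a) · ∏_{i=2}^{λ-1} ∏_{a_0,…,a_{i-1}∈F_q}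
(X_i + ∑_{j=1}^{i-1} a_j X_j + a_0)`, where `F_q = {x | x^q = x}` is the subfield
with `q` elements. -/
def f0 (q lam : ℕ) (F : Type) [Field F] [Fintype F] [DecidableEq F] : MvPolynomial ℕ F :=
  (∏ a ∈ Finset.univ.filter (fun x : F => x ^ q = x), (X 1 + C a)) *
    ∏ i ∈ Finset.Icc 2 (lam - 1),
      ∏ a : Fin i → {x : F // x ^ q = x},
        (X i + ∑ j : Fin i, C (a j).val * if (j : ℕ) = 0 then 1 else X (j : ℕ))

/-- `J_s = {1,…,λ+1} \ {s+1}`. -/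
def Jset (lam s : ℕ) : Set ℕ := Set.Icc 1 (lam + 1) \ {s + 1}

/-- `L_s = {λ+1-t : t ∈ (J_s \ {1}) ∪ {0}}`. -/
def Lset (lam s : ℕ) : Set ℕ := (fun t => lam + 1 - t) '' ((Jset lam s \ {1}) ∪ {0})

/-- `M_s = {λ+1-t : t ∈ J_s}`. -/
def MsetJ (lam s : ℕ) : Set ℕ := (fun t => lam + 1 - t) '' Jset lam s

/-! Writing `ξ = (1, X_1, …, X_{λ-1})`, `f^I` is the Moore determinant `det (ξ_t ^ q ^ i_s)`.
Since `x ↦ x ^ q ^ k` is an `F_q`-algebra map (Frobenius), the Moore matrix of the linear forms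
`P_t = ∑_i a_{i,t} ξ_i` is the Moore matrix of `ξ` times `A`. Substituting `φ_t = P_t / D`
(where also `P_0 / D = 1 = ξ_0`) divides row `s` by `D ^ q ^ i_s`. -/

def mooreMatrix {R σ τ : Type*} [Monoid R] (q : ℕ) (ι : σ → ℕ) (v : τ → R) : Matrix σ τ R :=
  Matrix.of fun s t => v t ^ q ^ ι s

section Moore

variable {R S σ τ : Type*} (q : ℕ) (ι : σ → ℕ)

theorem mooreMatrix_mul_map_algebraMap {F : Type*} [Field F] [Fintype F] [CommRing R]
    [Algebra F R] [Fintype τ] (v : τ → R) (A : Matrix τ τ F) :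
    mooreMatrix (Fintype.card F) ι v * A.map (algebraMap F R) =
      mooreMatrix (Fintype.card F) ι fun t => ∑ i, A i t • v i := by
  ext s t
  have hfrob : ∀ x : R, x ^ Fintype.card F ^ ι s = (FiniteField.frobeniusAlgHom F R ^ ι s) x := by
    intro x
    rw [AlgHom.coe_pow, FiniteField.coe_frobeniusAlgHom, pow_iterate]
  simp only [mooreMatrix, Matrix.mul_apply, Matrix.of_apply, Matrix.map_apply]
  rw [hfrob, map_sum]
  refine Finset.sum_congr rfl fun i _ => ?_
  rw [map_smul, ← hfrob, Algebra.smul_def, mul_comm]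

variable [Fintype σ] [DecidableEq σ]

theorem det_mooreMatrix_div [Field R] (y : σ → R) (c : R) :
    (mooreMatrix q ι fun t => y t / c).det = (mooreMatrix q ι y).det / c ^ ∑ s, q ^ ι s := by
  have hrows : (mooreMatrix q ι fun t => y t / c) =
      Matrix.of fun s t => c⁻¹ ^ q ^ ι s * mooreMatrix q ι y s t := by
    ext s t
    simp [mooreMatrix, div_eq_mul_inv, mul_pow, mul_comm]
  rw [hrows, Matrix.det_mul_column, Finset.prod_pow_eq_pow_sum, inv_pow, div_eq_inv_mul]

theorem RingHom.map_det_mooreMatrix [CommRing R] [CommRing S] (f : R →+* S) (v : σ → R) :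
    f (mooreMatrix q ι v).det = (mooreMatrix q ι (f ∘ v)).det := by
  rw [RingHom.map_det]
  congr 1
  ext s t
  simp [mooreMatrix]

end Moore

section AffineVar

variable {F : Type*} {n : ℕ}

def affineVar [CommSemiring F] (i : Fin n) : MvPolynomial ℕ F :=
  if (i : ℕ) = 0 then 1 else X i

def affineExp (i : Fin n) : ℕ →₀ ℕ :=
  if (i : ℕ) = 0 then 0 else Finsupp.single i 1

theorem affineExp_injective : Function.Injective (affineExp : Fin n → ℕ →₀ ℕ) := by
  intro i j h
  unfold affineExp at h
  split_ifs at h with hi hj hj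
  · exact Fin.ext (hi.trans hj.symm)
  · exact absurd h.symm (by simp)
  · exact absurd h (by simp)
  · exact Fin.ext ((Finsupp.single_left_inj one_ne_zero).mp h)

variable [Field F]

theorem linearIndependent_affineVar :
    LinearIndependent F (affineVar : Fin n → MvPolynomial ℕ F) := by
  have h := (basisMonomials ℕ F).linearIndependent.comp _ (affineExp_injective (n := n))
  have hmonomial : ⇑(basisMonomials ℕ F) ∘ affineExp = (affineVar : Fin n → MvPolynomial ℕ F) := by
    ext1 i
    simp only [Function.comp_apply, coe_basisMonomials, affineExp, affineVar]
    split_ifs <;> rfl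
  rwa [hmonomial] at h

theorem sum_C_mul_affineVar_ne_zero {a : Fin n → F} (ha : a ≠ 0) :
    ∑ i, C (a i) * (affineVar i : MvPolynomial ℕ F) ≠ 0 := by
  simp_rw [C_mul']
  intro h
  exact ha (funext (Fintype.linearIndependent_iff.mp linearIndependent_affineVar a h))

end AffineVar

theorem fI_eq_det_mooreMatrix (q lam : ℕ) (F : Type) [CommRing F] (ι : Fin lam → ℕ) :
    fI q lam F ι = (mooreMatrix q ι affineVar).det := by
  unfold fI mooreMatrix affineVar
  congr 1
  ext s t : 1
  simp only [Matrix.of_apply]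
  split_ifs <;> simp

theorem stmt17_general (q lam : ℕ)
    [NeZero lam]
    (F : Type) [Field F] [Fintype F] (hcard : Fintype.card F = q)
    (A : Matrix (Fin lam) (Fin lam) F) (hAinv : IsUnit A.det)
    (ξ : Fin lam → MvPolynomial ℕ F)
    (hξ : ∀ i : Fin lam, ξ i = if (i : ℕ) = 0 then 1 else X (i : ℕ))
    (D : MvPolynomial ℕ F) (hD : D = ∑ i, C (A i 0) * ξ i)
    (φ : ℕ → FractionRing (MvPolynomial ℕ F))
    (hφ : ∀ (j : ℕ) (hj : j < lam), φ j =
      algebraMap (MvPolynomial ℕ F) (FractionRing (MvPolynomial ℕ F))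
          (∑ i, C (A i ⟨j, hj⟩) * ξ i) /
        algebraMap (MvPolynomial ℕ F) (FractionRing (MvPolynomial ℕ F)) D)
    (ι : Fin lam → ℕ) (N : ℕ) (hN : N = ∑ s, q ^ ι s) :
    D ≠ 0 ∧
    eval₂ ((algebraMap (MvPolynomial ℕ F) (FractionRing (MvPolynomial ℕ F))).comp
        (C : F →+* MvPolynomial ℕ F)) φ (fI q lam F ι) =
      algebraMap (MvPolynomial ℕ F) (FractionRing (MvPolynomial ℕ F)) (C A.det) *
        algebraMap (MvPolynomial ℕ F) (FractionRing (MvPolynomial ℕ F)) (fI q lam F ι) /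
        (algebraMap (MvPolynomial ℕ F) (FractionRing (MvPolynomial ℕ F)) D) ^ N := by
  obtain rfl : ξ = affineVar := funext hξ
  set α := algebraMap (MvPolynomial ℕ F) (FractionRing (MvPolynomial ℕ F))
  set P : Fin lam → MvPolynomial ℕ F := fun t => ∑ i, C (A i t) * affineVar i
  have hD0 : D ≠ 0 := hD ▸ sum_C_mul_affineVar_ne_zero fun h =>
    hAinv.ne_zero (Matrix.det_eq_zero_of_column_eq_zero 0 (congrFun h))
  have hαD : α D ≠ 0 := (map_ne_zero_iff α (IsFractionRing.injective _ _)).mpr hD0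
  have heval : eval₂Hom (α.comp C) φ ∘ affineVar = fun t => α (P t) / α D := by
    ext t
    by_cases ht : (t : ℕ) = 0
    · obtain rfl : t = 0 := Fin.ext ht
      rw [Function.comp_apply, show P 0 = D from hD.symm, div_self hαD]
      simp [affineVar]
    · simp [affineVar, ht, hφ t t.isLt, P]
  have hP : mooreMatrix q ι P = mooreMatrix q ι affineVar * A.map C := by
    rw [← hcard, ← algebraMap_eq, mooreMatrix_mul_map_algebraMap]
    simp_rw [P, C_mul']
  refine ⟨hD0, ?_⟩
  calc eval₂ (α.comp C) φ (fI q lam F ι)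
      = (mooreMatrix q ι fun t => α (P t) / α D).det := by
        rw [← coe_eval₂Hom, fI_eq_det_mooreMatrix, RingHom.map_det_mooreMatrix, heval]
    _ = α (mooreMatrix q ι P).det / α D ^ N := by
        rw [det_mooreMatrix_div, ← hN, RingHom.map_det_mooreMatrix, Function.comp_def]
    _ = α (C A.det) * α (fI q lam F ι) / α D ^ N := by
        rw [hP, Matrix.det_mul, fI_eq_det_mooreMatrix, ← RingHom.mapMatrix_apply,
          ← RingHom.map_det, map_mul, mul_comm]

/-- substituting `X_j ↦ φ_j = (a_{0,j} + ∑_i a_{i,j} X_i)/D` into `f^I`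
multiplies it by `det(A)·D^{-N}` with `N = ∑_s q^{i_s}`. -/
theorem stmt17 (q lam : ℕ) (hq : ∃ p e : ℕ, p.Prime ∧ 0 < e ∧ q = p ^ e)
    (hlam : 2 ≤ lam) [NeZero lam]
    (F : Type) [Field F] [Fintype F] [DecidableEq F] (hcard : Fintype.card F = q)
    (A : Matrix (Fin lam) (Fin lam) F) (hAinv : IsUnit A.det)
    (ξ : Fin lam → MvPolynomial ℕ F)
    (hξ : ∀ i : Fin lam, ξ i = if (i : ℕ) = 0 then 1 else X (i : ℕ))
    (D : MvPolynomial ℕ F) (hD : D = ∑ i, C (A i 0) * ξ i)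
    (φ : ℕ → FractionRing (MvPolynomial ℕ F))
    (hφ : ∀ (j : ℕ) (hj : j < lam), φ j =
      algebraMap (MvPolynomial ℕ F) (FractionRing (MvPolynomial ℕ F))
          (∑ i, C (A i ⟨j, hj⟩) * ξ i) /
        algebraMap (MvPolynomial ℕ F) (FractionRing (MvPolynomial ℕ F)) D)
    (ι : Fin lam → ℕ) (hι : StrictMono ι) (N : ℕ) (hN : N = ∑ s, q ^ ι s) :
    D ≠ 0 ∧
    eval₂ ((algebraMap (MvPolynomial ℕ F) (FractionRing (MvPolynomial ℕ F))).comp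
        (C : F →+* MvPolynomial ℕ F)) φ (fI q lam F ι) =
      algebraMap (MvPolynomial ℕ F) (FractionRing (MvPolynomial ℕ F)) (C A.det) *
        algebraMap (MvPolynomial ℕ F) (FractionRing (MvPolynomial ℕ F)) (fI q lam F ι) /
        (algebraMap (MvPolynomial ℕ F) (FractionRing (MvPolynomial ℕ F)) D) ^ N :=
  stmt17_general q lam F hcard A hAinv ξ hξ D hD φ hφ ι N hN

end
end
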